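/- arXiv:2503.16225 — 2 statements merged into one kernel-verified Lean document; each statement's English description precedes it below -/
import Mathlib

section
/- Let H ∈ ℂ^{n×n} be Hermitian, Σ ∈ ℂ^{p×p} Hermitian, and suppose the linear map L(X) := HX − XΣ on ℂ^{n×p} is invertible. If Φ ∈ ℂ^{n×p} satisfies Φ*Φ = I_p and the matrix M := Φ*·L^{-1}(Φ) is Hermitian, invertible, and commutes with Σ, then X := L^{-1}(Φ)·M^{-1} satisfies Φ*X + X*Φ = 2·I_p and L(X) = Φ·M^{-1}. -/
open Matrix

theorem energy_adaptive_gradient_equation {n p : ℕ}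
    (H : Matrix (Fin n) (Fin n) ℂ) (hH : Hᴴ = H)
    (Sg : Matrix (Fin p) (Fin p) ℂ) (hSg : Sgᴴ = Sg)
    (L : Matrix (Fin n) (Fin p) ℂ ≃ₗ[ℂ] Matrix (Fin n) (Fin p) ℂ)
    (hL : ∀ X, L X = H * X - X * Sg)
    (Φ : Matrix (Fin n) (Fin p) ℂ) (hΦ : Φᴴ * Φ = 1)
    (hMherm : (Φᴴ * L.symm Φ)ᴴ = Φᴴ * L.symm Φ)
    (hMinv : IsUnit (Φᴴ * L.symm Φ))
    (hMcomm : (Φᴴ * L.symm Φ) * Sg = Sg * (Φᴴ * L.symm Φ)) :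
    Φᴴ * (L.symm Φ * (Φᴴ * L.symm Φ)⁻¹) + (L.symm Φ * (Φᴴ * L.symm Φ)⁻¹)ᴴ * Φ
        = (2 : ℂ) • (1 : Matrix (Fin p) (Fin p) ℂ) ∧
      L (L.symm Φ * (Φᴴ * L.symm Φ)⁻¹) = Φ * (Φᴴ * L.symm Φ)⁻¹ := by
  set Y := L.symm Φ with hY
  set M := Φᴴ * Y with hM
  have hdet : IsUnit M.det := (Matrix.isUnit_iff_isUnit_det M).mp hMinv
  have hMM : M * M⁻¹ = 1 := Matrix.mul_nonsing_inv M hdet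
  have hMM' : M⁻¹ * M = 1 := Matrix.nonsing_inv_mul M hdet
  have hinvcomm : M⁻¹ * Sg = Sg * M⁻¹ := by
    calc M⁻¹ * Sg = M⁻¹ * Sg * (M * M⁻¹) := by rw [hMM, mul_one]
    _ = M⁻¹ * (Sg * M) * M⁻¹ := by noncomm_ring
    _ = M⁻¹ * (M * Sg) * M⁻¹ := by rw [hMcomm]
    _ = (M⁻¹ * M) * Sg * M⁻¹ := by noncomm_ring
    _ = Sg * M⁻¹ := by rw [hMM', one_mul]
  constructor
  · have h1 : Φᴴ * (Y * M⁻¹) = 1 := by rw [← Matrix.mul_assoc, ← hM, hMM]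
    have h2 : (Y * M⁻¹)ᴴ * Φ = 1 := by
      rw [conjTranspose_mul, Matrix.conjTranspose_nonsing_inv, hMherm,
        Matrix.mul_assoc]
      have : Yᴴ * Φ = M := by
        rw [← hMherm, hM, conjTranspose_mul, conjTranspose_conjTranspose]
      rw [this, hMM']
    rw [h1, h2, two_smul]
  · have hLY : H * Y - Y * Sg = Φ := by rw [← hL, hY, L.apply_symm_apply]
    rw [hL]
    calc H * (Y * M⁻¹) - Y * M⁻¹ * Sg
        = H * (Y * M⁻¹) - Y * (Sg * M⁻¹) := by rw [← hinvcomm, Matrix.mul_assoc]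
      _ = (H * Y - Y * Sg) * M⁻¹ := by rw [Matrix.sub_mul, Matrix.mul_assoc, Matrix.mul_assoc]
      _ = Φ * M⁻¹ := by rw [hLY]
end

section
/- Let H ∈ ℂ^{n×n} be Hermitian, Φ ∈ ℂ^{n×p} with Φ*Φ = I_p and HΦ = Φ·Λ where Λ := Φ*HΦ has eigenvalues λ₁ ≤ … ≤ λ_p equal to the p smallest eigenvalues of H (Aufbau principle). Then for every ξ ∈ ℂ^{n×p} with Φ*ξ = 0, one has Re(tr(ξ*(Hξ − ξΛ))) ≥ (λ_{p+1} − λ_p)·‖ξ‖_F², where λ_{p+1} is the (p+1)-st smallest eigenvalue of H. -/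
/-!
Pass to the eigenbasis of `H`, where `H` is `D = diag μ` and the columns of `Θ = Uᴴ Φ W` are
orthonormal eigenvectors of `D` with eigenvalues `μ₁, …, μ_p`. An eigenvector can only be
nonzero where `μ` takes its eigenvalue, so the columns of `Θ` with eigenvalue below `μ_{p+1}`
live on the rows `{i | μ i < μ_{p+1}}`; by the Aufbau principle there are as many such columns
as rows, so they form a unitary block. Hence `Uᴴ ξ`, being orthogonal to `Θ`, vanishes on these
rows, and `Re tr(ξᴴ H ξ) ≥ μ_{p+1} ‖ξ‖²`. In the basis given by `W`, `Λ = diag(μ₁, …, μ_p)`,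
so `Re tr(ξᴴ ξ Λ) ≤ μ_p ‖ξ‖²`.
-/

open Matrix

namespace Matrix

variable {𝕜 : Type*} [RCLike 𝕜] {m k l : Type*} [Fintype m] [Fintype k]

lemma apply_eq_zero_of_diagonal_mul_eq_mul_diagonal [DecidableEq m] [DecidableEq k]
    {d : m → ℝ} {e : k → ℝ} {Θ : Matrix m k 𝕜}
    (hΘ : diagonal (fun i => (d i : 𝕜)) * Θ = Θ * diagonal (fun j => (e j : 𝕜)))
    {i : m} {j : k} (hij : d i ≠ e j) : Θ i j = 0 := by
  have h := congrFun (congrFun hΘ i) j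
  rw [diagonal_mul, mul_diagonal] at h
  have : ((d i : 𝕜) - e j) * Θ i j = 0 := by rw [sub_mul, h, mul_comm, sub_self]
  exact (mul_eq_zero.mp this).resolve_left (sub_ne_zero.mpr (by exact_mod_cast hij))

lemma apply_eq_zero_of_conjTranspose_mul_eq_zero [DecidableEq m] [DecidableEq k]
    {d : m → ℝ} {ι : k → m} (hι : Function.Injective ι) {Θ : Matrix m k 𝕜}
    (hΘ : Θᴴ * Θ = 1)
    (hdΘ : diagonal (fun i => (d i : 𝕜)) * Θ = Θ * diagonal (fun j => (d (ι j) : 𝕜)))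
    {t : ℝ} (hcover : ∀ i, d i < t → i ∈ Set.range ι) {η : Matrix m l 𝕜}
    (hη : Θᴴ * η = 0) {i : m} (hi : d i < t) (c : l) : η i c = 0 := by
  let S := {i // d i < t}
  let S' := {j // d (ι j) < t}
  let e : S' ≃ S := Equiv.ofBijective (fun j => ⟨ι j.1, j.2⟩)
    ⟨fun a b h => Subtype.ext (hι (congrArg Subtype.val h)), fun ⟨i, hi⟩ => by
      obtain ⟨j, rfl⟩ := hcover i hi
      exact ⟨⟨j, hi⟩, rfl⟩⟩
  have hsum (j : S') (f : m → 𝕜) :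
      ∑ i : S, star (Θ i j) * f i = ∑ i, star (Θ i j) * f i := by
    rw [← Fintype.sum_subtype_add_sum_subtype (fun i => d i < t), left_eq_add]
    refine Fintype.sum_eq_zero _ fun i => ?_
    rw [apply_eq_zero_of_diagonal_mul_eq_mul_diagonal hdΘ (fun h => i.2 (h ▸ j.2)),
      star_zero, zero_mul]
  set A : Matrix S S' 𝕜 := Θ.submatrix Subtype.val Subtype.val
  set B : Matrix S l 𝕜 := η.submatrix Subtype.val id
  have hA : Aᴴ * A = 1 := by
    ext a b
    have h := congrFun (congrFun hΘ a) b
    simp only [mul_apply, conjTranspose_apply, ← hsum] at h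
    simp only [A, mul_apply, conjTranspose_apply, submatrix_apply] at h ⊢
    rw [h, one_apply, one_apply]
    exact if_congr Subtype.val_inj rfl rfl
  have hB : Aᴴ * B = 0 := by
    ext a c
    have h := congrFun (congrFun hη a) c
    simp only [mul_apply, conjTranspose_apply, ← hsum] at h
    simpa [A, B, mul_apply] using h
  have hAA : A * Aᴴ = 1 := (mul_eq_one_comm_of_equiv e).mp hA
  have hB0 : B = 0 := by
    rw [← Matrix.one_mul B, ← hAA, Matrix.mul_assoc, hB, Matrix.mul_zero]
  exact congrFun (congrFun hB0 ⟨i, hi⟩) c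

lemma re_trace_conjTranspose_mul_diagonal_mul [DecidableEq m] (d : m → ℝ)
    (X : Matrix m k 𝕜) :
    RCLike.re (Xᴴ * (diagonal (fun i => (d i : 𝕜)) * X)).trace
      = ∑ i, d i * ∑ c, ‖X i c‖ ^ 2 := by
  have hterm (i : m) (c : k) :
      RCLike.re (star (X i c) * ((d i : 𝕜) * X i c)) = d i * ‖X i c‖ ^ 2 := by
    rw [mul_left_comm, RCLike.star_def, RCLike.conj_mul]
    norm_cast
  simp only [trace, diag_apply, mul_apply (M := Xᴴ), diagonal_mul, conjTranspose_apply,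
    map_sum, hterm]
  rw [Finset.sum_comm]
  simp only [Finset.mul_sum]

lemma re_trace_conjTranspose_mul_self (X : Matrix m k 𝕜) :
    RCLike.re (Xᴴ * X).trace = ∑ i, ∑ c, ‖X i c‖ ^ 2 := by
  classical
  simpa using re_trace_conjTranspose_mul_diagonal_mul (fun _ => 1) X

lemma mul_re_trace_le_re_trace_conjTranspose_mul_diagonal_mul [DecidableEq m] {d : m → ℝ}
    {t : ℝ} {X : Matrix m k 𝕜} (hX : ∀ i, d i < t → ∀ c, X i c = 0) :
    t * RCLike.re (Xᴴ * X).trace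
      ≤ RCLike.re (Xᴴ * (diagonal (fun i => (d i : 𝕜)) * X)).trace := by
  rw [re_trace_conjTranspose_mul_self, re_trace_conjTranspose_mul_diagonal_mul,
    Finset.mul_sum]
  refine Finset.sum_le_sum fun i _ => ?_
  rcases lt_or_ge (d i) t with hi | hi
  · simp [hX i hi]
  · exact mul_le_mul_of_nonneg_right hi (by positivity)

lemma re_trace_conjTranspose_mul_diagonal_mul_le [DecidableEq m] {d : m → ℝ} {s : ℝ}
    (hd : ∀ i, d i ≤ s) (X : Matrix m k 𝕜) :
    RCLike.re (Xᴴ * (diagonal (fun i => (d i : 𝕜)) * X)).trace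
      ≤ s * RCLike.re (Xᴴ * X).trace := by
  rw [re_trace_conjTranspose_mul_self, re_trace_conjTranspose_mul_diagonal_mul,
    Finset.mul_sum]
  exact Finset.sum_le_sum fun i _ => mul_le_mul_of_nonneg_right (hd i) (by positivity)

lemma mul_re_trace_le_re_trace_of_conjTranspose_mul_eq_zero [Fintype l]
    [DecidableEq m] [DecidableEq k] {U : Matrix m m 𝕜} (hU : Uᴴ * U = 1) (hUU : U * Uᴴ = 1)
    {d : m → ℝ} {Φ : Matrix m k 𝕜} (hΦ : Φᴴ * Φ = 1) {W : Matrix k k 𝕜} (hW : Wᴴ * W = 1)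
    {ι : k → m} (hι : Function.Injective ι)
    (heig : U * diagonal (fun i => (d i : 𝕜)) * Uᴴ * Φ
      = Φ * (W * diagonal (fun j => (d (ι j) : 𝕜)) * Wᴴ))
    {t : ℝ} (hcover : ∀ i, d i < t → i ∈ Set.range ι) {ξ : Matrix m l 𝕜}
    (hξ : Φᴴ * ξ = 0) :
    t * RCLike.re (ξᴴ * ξ).trace
      ≤ RCLike.re (ξᴴ * (U * diagonal (fun i => (d i : 𝕜)) * Uᴴ * ξ)).trace := by
  have hΘ : (Uᴴ * Φ * W)ᴴ * (Uᴴ * Φ * W) = 1 := by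
    simp only [conjTranspose_mul, conjTranspose_conjTranspose, Matrix.mul_assoc]
    rw [← Matrix.mul_assoc U, hUU, Matrix.one_mul, ← Matrix.mul_assoc Φᴴ, hΦ, Matrix.one_mul,
      hW]
  have hdΘ : diagonal (fun i => (d i : 𝕜)) * (Uᴴ * Φ * W)
      = Uᴴ * Φ * W * diagonal (fun j => (d (ι j) : 𝕜)) :=
    calc _ = Uᴴ * (U * diagonal (fun i => (d i : 𝕜)) * Uᴴ * Φ) * W := by
          simp only [Matrix.mul_assoc, ← Matrix.mul_assoc Uᴴ U, hU, Matrix.one_mul]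
      _ = _ := by
          rw [heig]
          simp only [Matrix.mul_assoc, hW, Matrix.mul_one]
  have hη : (Uᴴ * Φ * W)ᴴ * (Uᴴ * ξ) = 0 := by
    simp only [conjTranspose_mul, conjTranspose_conjTranspose, Matrix.mul_assoc]
    rw [← Matrix.mul_assoc U, hUU, Matrix.one_mul, hξ, Matrix.mul_zero]
  have hnorm : (Uᴴ * ξ)ᴴ * (Uᴴ * ξ) = ξᴴ * ξ := by
    simp only [conjTranspose_mul, conjTranspose_conjTranspose, Matrix.mul_assoc]
    rw [← Matrix.mul_assoc U, hUU, Matrix.one_mul]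
  have hform : (Uᴴ * ξ)ᴴ * (diagonal (fun i => (d i : 𝕜)) * (Uᴴ * ξ))
      = ξᴴ * (U * diagonal (fun i => (d i : 𝕜)) * Uᴴ * ξ) := by
    simp only [conjTranspose_mul, conjTranspose_conjTranspose, Matrix.mul_assoc]
  rw [← hnorm, ← hform]
  exact mul_re_trace_le_re_trace_conjTranspose_mul_diagonal_mul fun i hi =>
    apply_eq_zero_of_conjTranspose_mul_eq_zero hι hΘ hdΘ hcover hη hi

lemma re_trace_conjTranspose_mul_mul_unitary_diagonal_le [DecidableEq k] {W : Matrix k k 𝕜}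
    (hWW : W * Wᴴ = 1) {e : k → ℝ} {s : ℝ} (he : ∀ j, e j ≤ s) (ξ : Matrix m k 𝕜) :
    RCLike.re (ξᴴ * (ξ * (W * diagonal (fun j => (e j : 𝕜)) * Wᴴ))).trace
      ≤ s * RCLike.re (ξᴴ * ξ).trace := by
  have hnorm : ((Wᴴ * ξᴴ)ᴴ * (Wᴴ * ξᴴ)).trace = (ξᴴ * ξ).trace := by
    rw [conjTranspose_mul, conjTranspose_conjTranspose, conjTranspose_conjTranspose,
      Matrix.mul_assoc, ← Matrix.mul_assoc W, hWW, Matrix.one_mul, trace_mul_comm]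
  have hform : ((Wᴴ * ξᴴ)ᴴ * (diagonal (fun j => (e j : 𝕜)) * (Wᴴ * ξᴴ))).trace
      = (ξᴴ * (ξ * (W * diagonal (fun j => (e j : 𝕜)) * Wᴴ))).trace := by
    rw [trace_mul_comm ξᴴ]
    simp only [conjTranspose_mul, conjTranspose_conjTranspose, Matrix.mul_assoc]
  rw [← hnorm, ← hform]
  exact re_trace_conjTranspose_mul_diagonal_mul_le he _

end Matrix

theorem horizontal_coercivity_gap_general {n p : ℕ} (hp : 0 < p) (hpn : p < n)
    (H : Matrix (Fin n) (Fin n) ℂ)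
    (Φ : Matrix (Fin n) (Fin p) ℂ) (hΦ : Φᴴ * Φ = 1)
    (μ : Fin n → ℝ) (hmono : Monotone μ)
    (U : Matrix (Fin n) (Fin n) ℂ) (hU : Uᴴ * U = 1) (hUU : U * Uᴴ = 1)
    (hdiag : H = U * Matrix.diagonal (fun i => (μ i : ℂ)) * Uᴴ)
    (heig : H * Φ = Φ * (Φᴴ * H * Φ))
    (W : Matrix (Fin p) (Fin p) ℂ) (hW : Wᴴ * W = 1) (hWW : W * Wᴴ = 1)
    (hAufbau : Φᴴ * H * Φ
      = W * Matrix.diagonal (fun i : Fin p => (μ (Fin.castLE hpn.le i) : ℂ)) * Wᴴ)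
    (ξ : Matrix (Fin n) (Fin p) ℂ) (hξ : Φᴴ * ξ = 0) :
    (μ ⟨p, hpn⟩ - μ ⟨p - 1, Nat.lt_of_lt_of_le (Nat.sub_lt hp one_pos) hpn.le⟩)
        * ((ξᴴ * ξ).trace).re
      ≤ ((ξᴴ * (H * ξ - ξ * (Φᴴ * H * Φ))).trace).re := by
  have hcover (i : Fin n) (hi : μ i < μ ⟨p, hpn⟩) : i ∈ Set.range (Fin.castLE hpn.le) :=
    ⟨⟨i, by by_contra h; exact hi.not_ge (hmono (Fin.le_def.mpr (not_lt.mp h)))⟩, rfl⟩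
  have hlow : μ ⟨p, hpn⟩ * (ξᴴ * ξ).trace.re ≤ (ξᴴ * (H * ξ)).trace.re := by
    subst hdiag
    exact mul_re_trace_le_re_trace_of_conjTranspose_mul_eq_zero hU hUU hΦ hW
      (Fin.castLE_injective hpn.le) (heig.trans (congrArg (Φ * ·) hAufbau)) hcover hξ
  have hhigh :
      (ξᴴ * (ξ * (Φᴴ * H * Φ))).trace.re ≤ μ ⟨p - 1, by omega⟩ * (ξᴴ * ξ).trace.re := by
    rw [hAufbau]
    exact re_trace_conjTranspose_mul_mul_unitary_diagonal_le hWW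
      (fun j => hmono (Fin.le_def.mpr (by simp only [Fin.val_castLE]; omega))) ξ
  rw [Matrix.mul_sub, trace_sub, Complex.sub_re, sub_mul]
  linarith

theorem horizontal_coercivity_gap {n p : ℕ} (hp : 0 < p) (hpn : p < n)
    (H : Matrix (Fin n) (Fin n) ℂ) (hH : Hᴴ = H)
    (Φ : Matrix (Fin n) (Fin p) ℂ) (hΦ : Φᴴ * Φ = 1)
    (μ : Fin n → ℝ) (hmono : Monotone μ)
    (U : Matrix (Fin n) (Fin n) ℂ) (hU : Uᴴ * U = 1) (hUU : U * Uᴴ = 1)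
    (hdiag : H = U * Matrix.diagonal (fun i => (μ i : ℂ)) * Uᴴ)
    (heig : H * Φ = Φ * (Φᴴ * H * Φ))
    (W : Matrix (Fin p) (Fin p) ℂ) (hW : Wᴴ * W = 1) (hWW : W * Wᴴ = 1)
    (hAufbau : Φᴴ * H * Φ
      = W * Matrix.diagonal (fun i : Fin p => (μ (Fin.castLE hpn.le i) : ℂ)) * Wᴴ)
    (ξ : Matrix (Fin n) (Fin p) ℂ) (hξ : Φᴴ * ξ = 0) :
    (μ ⟨p, hpn⟩ - μ ⟨p - 1, Nat.lt_of_lt_of_le (Nat.sub_lt hp one_pos) hpn.le⟩)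
        * ((ξᴴ * ξ).trace).re
      ≤ ((ξᴴ * (H * ξ - ξ * (Φᴴ * H * Φ))).trace).re :=
  horizontal_coercivity_gap_general hp hpn H Φ hΦ μ hmono U hU hUU hdiag heig W hW hWW hAufbau ξ hξ
end
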